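/- Let d ≥ 3 and let A ∈ ℂ^{d×d} satisfy condition (C_d) with det(A) = (−1)^{d−1}. Then the function w_M : ℝ → ℝ is continuous, even (w_M(−θ) = w_M(θ)), periodic with period 2π/d, and strictly decreasing on the interval [0, π/d]; consequently w_M attains its maximum over ℝ at θ = 0 and its minimum over ℝ at θ = π/d. -/

import Mathlib

open Matrix Complex

/-- Condition `(C_d)`. -/
def CondC {d : ℕ} (A : Matrix (Fin d) (Fin d) ℂ) : Prop :=
  ∃ P : Polynomial ℝ, ∀ θ : ℝ, ∀ w : ℂ,
    (w • (1 : Matrix (Fin d) (Fin d) ℂ)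
        - (1/2 : ℂ) • (Complex.exp (-(θ : ℂ) * Complex.I) • A
            + Complex.exp ((θ : ℂ) * Complex.I) • Aᴴ)).det
      = Polynomial.aeval w P
        - ((-1/2 : ℂ)) ^ (d - 1)
            * ((Complex.exp (-(d : ℂ) * (θ : ℂ) * Complex.I) * A.det).re : ℂ)

/-- `wM A θ` is the largest eigenvalue of the Hermitian matrix
`(1/2)(e^{−iθ}A + e^{iθ}A*)` (all its eigenvalues are real). -/
noncomputable def wM {d : ℕ} (A : Matrix (Fin d) (Fin d) ℂ) (θ : ℝ) : ℝ :=
  sSup { μ : ℝ | ∃ x : Fin d → ℂ, x ≠ 0 ∧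
    ((1/2 : ℂ) • (Complex.exp (-(θ : ℂ) * Complex.I) • A
        + Complex.exp ((θ : ℂ) * Complex.I) • Aᴴ)).mulVec x = (μ : ℂ) • x }

noncomputable def Hmat {d : ℕ} (A : Matrix (Fin d) (Fin d) ℂ) (θ : ℝ) : Matrix (Fin d) (Fin d) ℂ :=
  (1/2 : ℂ) • (Complex.exp (-(θ : ℂ) * Complex.I) • A + Complex.exp ((θ : ℂ) * Complex.I) • Aᴴ)

lemma Hmat_isHermitian {d : ℕ} (A : Matrix (Fin d) (Fin d) ℂ) (θ : ℝ) :
    (Hmat A θ).IsHermitian := by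
  unfold Matrix.IsHermitian Hmat
  have h1 : star (Complex.exp (-(θ : ℂ) * Complex.I)) = Complex.exp ((θ : ℂ) * Complex.I) := by
    rw [Complex.star_def, ← Complex.exp_conj]
    congr 1
    simp [Complex.conj_I]
  have h2 : star (Complex.exp ((θ : ℂ) * Complex.I)) = Complex.exp (-(θ : ℂ) * Complex.I) := by
    rw [Complex.star_def, ← Complex.exp_conj]
    congr 1
    simp [Complex.conj_I]
  rw [Matrix.conjTranspose_smul, Matrix.conjTranspose_add, Matrix.conjTranspose_smul,
    Matrix.conjTranspose_smul, Matrix.conjTranspose_conjTranspose, h1, h2]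
  norm_num [add_comm]

lemma det_smul_one_sub {d : ℕ} (A : Matrix (Fin d) (Fin d) ℂ) (θ : ℝ) (w : ℂ) :
    (w • (1 : Matrix (Fin d) (Fin d) ℂ) - Hmat A θ).det
      = ∏ i, (w - ((Hmat_isHermitian A θ).eigenvalues i : ℂ)) := by
  set hH := Hmat_isHermitian A θ
  set U : Matrix (Fin d) (Fin d) ℂ := (hH.eigenvectorUnitary : Matrix (Fin d) (Fin d) ℂ)
  have hU : U * star U = 1 := (Matrix.mem_unitaryGroup_iff).mp hH.eigenvectorUnitary.2
  have key : w • (1 : Matrix (Fin d) (Fin d) ℂ) - Hmat A θ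
      = U * (w • (1 : Matrix (Fin d) (Fin d) ℂ)
          - diagonal (RCLike.ofReal ∘ hH.eigenvalues)) * star U := by
    rw [Matrix.mul_sub, Matrix.sub_mul]
    congr 1
    · rw [Matrix.mul_smul, Matrix.mul_one, Matrix.smul_mul, hU]
    · exact hH.spectral_theorem
  rw [key, Matrix.det_mul, Matrix.det_mul, mul_comm, ← mul_assoc, ← Matrix.det_mul, (Matrix.mem_unitaryGroup_iff').mp hH.eigenvectorUnitary.2]
  simp only [Matrix.det_one, one_mul]
  rw [Matrix.smul_one_eq_diagonal, Matrix.diagonal_sub, Matrix.det_diagonal]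
  rfl

lemma const_eq (d : ℕ) (θ : ℝ) :
    ((-1/2 : ℂ))^(d-1) * (((Complex.exp (-(d:ℂ)*(θ:ℂ)*Complex.I) * (-1:ℂ)^(d-1)).re : ℝ) : ℂ)
      = ((((1/2:ℝ))^(d-1) * Real.cos (d*θ) : ℝ) : ℂ) := by
  have h : (-(d:ℂ)*(θ:ℂ)*Complex.I) = ((-(d*θ):ℝ):ℂ) * Complex.I := by push_cast; ring
  have h2 : (-1:ℂ)^(d-1) = ((((-1:ℝ)^(d-1) : ℝ)):ℂ) := by push_cast; ring
  rw [h, h2]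
  have h3 : (Complex.exp (((-(d*θ):ℝ):ℂ) * Complex.I) * ((((-1:ℝ)^(d-1) : ℝ)):ℂ)).re
      = Real.cos (-(d*θ)) * (-1:ℝ)^(d-1) := by
    rw [Complex.mul_re]
    simp only [Complex.ofReal_re, Complex.ofReal_im, mul_zero, sub_zero]
    rw [Complex.exp_ofReal_mul_I_re]
  rw [h3, Real.cos_neg]
  push_cast
  rw [mul_comm, mul_assoc, ← mul_pow]
  norm_num
  ring

section main

variable {d : ℕ} (A : Matrix (Fin d) (Fin d) ℂ) (P : Polynomial ℝ)

/-- eigenvalues of `Hmat A θ` -/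
noncomputable def lam (θ : ℝ) : Fin d → ℝ := (Hmat_isHermitian A θ).eigenvalues

/-- the constant `c cos (dθ)` -/
noncomputable def tf (d : ℕ) (θ : ℝ) : ℝ := (1/2:ℝ)^(d-1) * Real.cos (d*θ)

variable (hP : ∀ θ : ℝ, ∀ w : ℂ,
    (w • (1 : Matrix (Fin d) (Fin d) ℂ)
        - (1/2 : ℂ) • (Complex.exp (-(θ : ℂ) * Complex.I) • A
            + Complex.exp ((θ : ℂ) * Complex.I) • Aᴴ)).det
      = Polynomial.aeval w P
        - ((-1/2 : ℂ)) ^ (d - 1)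
            * ((Complex.exp (-(d : ℂ) * (θ : ℂ) * Complex.I) * A.det).re : ℂ))
  (hdet : A.det = (-1 : ℂ) ^ (d - 1))

include hP hdet

lemma cprod (θ : ℝ) (w : ℂ) :
    Polynomial.aeval w P - ((tf d θ : ℝ) : ℂ) = ∏ i, (w - ((lam A θ i : ℝ) : ℂ)) := by
  have h := hP θ w
  rw [hdet, const_eq] at h
  unfold tf lam
  rw [← det_smul_one_sub]
  exact h.symm

lemma rprod (θ : ℝ) (x : ℝ) :
    Polynomial.eval x P - tf d θ = ∏ i, (x - lam A θ i) := by
  have h := cprod A P hP hdet θ (x : ℂ)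
  have hx : (Polynomial.aeval (x:ℂ)) P = ((Polynomial.eval x P : ℝ) : ℂ) := by
    rw [show ((x:ℝ):ℂ) = algebraMap ℝ ℂ x from rfl, Polynomial.aeval_algebraMap_apply]
    simp
  rw [hx] at h
  rw [← Complex.ofReal_inj]
  push_cast
  exact h

omit hP hdet in
lemma memS (θ : ℝ) (μ : ℝ) :
    (∃ x : Fin d → ℂ, x ≠ 0 ∧ (Hmat A θ).mulVec x = (μ : ℂ) • x) ↔ ∃ i, lam A θ i = μ := by
  have h1 : (∃ x : Fin d → ℂ, x ≠ 0 ∧ (Hmat A θ).mulVec x = (μ : ℂ) • x)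
      ↔ ((μ : ℂ) • (1 : Matrix (Fin d) (Fin d) ℂ) - Hmat A θ).det = 0 := by
    rw [← Matrix.exists_mulVec_eq_zero_iff]
    constructor
    · rintro ⟨x, hx, he⟩
      exact ⟨x, hx, by rw [Matrix.sub_mulVec, Matrix.smul_mulVec, Matrix.one_mulVec, he,
        sub_self]⟩
    · rintro ⟨x, hx, he⟩
      refine ⟨x, hx, ?_⟩
      rw [Matrix.sub_mulVec, Matrix.smul_mulVec, Matrix.one_mulVec, sub_eq_zero] at he
      exact he.symm
  rw [h1, det_smul_one_sub, Finset.prod_eq_zero_iff]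
  constructor
  · rintro ⟨i, -, hi⟩
    exact ⟨i, by exact_mod_cast (sub_eq_zero.mp hi).symm⟩
  · rintro ⟨i, hi⟩
    exact ⟨i, Finset.mem_univ i, by rw [sub_eq_zero]; exact_mod_cast hi.symm⟩

omit hP hdet in
lemma wM_eq_sSup_range (θ : ℝ) : wM A θ = sSup (Set.range (lam A θ)) := by
  unfold wM
  congr 1
  ext μ
  exact (memS A θ μ).trans (by simp [eq_comm, Set.mem_range])

omit hP hdet in
lemma wM_mem (hd : 3 ≤ d) (θ : ℝ) : ∃ i, lam A θ i = wM A θ := by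
  have hne : (Set.range (lam A θ)).Nonempty := by
    have : Nonempty (Fin d) := Fin.pos_iff_nonempty.mp (by omega)
    exact Set.range_nonempty _
  have hfin : (Set.range (lam A θ)).Finite := Set.finite_range _
  have := hne.csSup_mem hfin
  rw [wM_eq_sSup_range]
  exact this

omit hP hdet in
lemma le_wM (θ : ℝ) (i : Fin d) : lam A θ i ≤ wM A θ := by
  rw [wM_eq_sSup_range]
  exact le_csSup (Set.finite_range _).bddAbove (Set.mem_range_self i)

lemma eval_wM (hd : 3 ≤ d) (θ : ℝ) : Polynomial.eval (wM A θ) P = tf d θ := by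
  obtain ⟨i, hi⟩ := wM_mem A hd θ
  have h := rprod A P hP hdet θ (wM A θ)
  rw [sub_eq_iff_eq_add] at h
  rw [h, Finset.prod_eq_zero (Finset.mem_univ i) (by rw [hi, sub_self]), zero_add]

lemma wM_lt_wM (hd : 3 ≤ d) {θ1 θ2 : ℝ} (h : tf d θ1 < tf d θ2) : wM A θ1 < wM A θ2 := by
  by_contra hcon
  push_neg at hcon
  have h1 : Polynomial.eval (wM A θ1) P = tf d θ1 := eval_wM A P hP hdet hd θ1
  have h2 := rprod A P hP hdet θ2 (wM A θ1)
  have hge : (0:ℝ) ≤ ∏ i, (wM A θ1 - lam A θ2 i) :=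
    Finset.prod_nonneg (fun i _ => sub_nonneg.mpr ((le_wM A θ2 i).trans hcon))
  rw [← h2, h1] at hge
  linarith

lemma range_lam_eq (θ : ℝ) :
    Set.range (lam A θ) = {μ : ℝ | Polynomial.eval μ P = tf d θ} := by
  ext μ
  have h := rprod A P hP hdet θ μ
  constructor
  · rintro ⟨i, hi⟩
    have h0 : ∏ i, (μ - lam A θ i) = 0 :=
      Finset.prod_eq_zero (Finset.mem_univ i) (by rw [hi, sub_self])
    have := h.trans h0
    simp only [Set.mem_setOf_eq]
    linarith
  · intro he
    simp only [Set.mem_setOf_eq] at he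
    have h0 : ∏ i, (μ - lam A θ i) = 0 := by rw [← h, he, sub_self]
    obtain ⟨i, -, hi⟩ := Finset.prod_eq_zero_iff.mp h0
    exact ⟨i, by linarith [sub_eq_zero.mp hi]⟩

lemma wM_eq_wM {θ1 θ2 : ℝ} (h : tf d θ1 = tf d θ2) : wM A θ1 = wM A θ2 := by
  rw [wM_eq_sSup_range, wM_eq_sSup_range, range_lam_eq A P hP hdet,
    range_lam_eq A P hP hdet, h]

lemma wM_le_wM (hd : 3 ≤ d) {θ1 θ2 : ℝ} (h : tf d θ1 ≤ tf d θ2) : wM A θ1 ≤ wM A θ2 := by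
  rcases h.lt_or_eq with h | h
  · exact (wM_lt_wM A P hP hdet hd h).le
  · exact (wM_eq_wM A P hP hdet h).le

lemma cont_aux (hd : 3 ≤ d) {θ1 θ2 ε : ℝ} (hε : 0 < ε)
    (hle : wM A θ1 + ε ≤ wM A θ2) : tf d θ1 + ε^d ≤ tf d θ2 := by
  have h2 := rprod A P hP hdet θ1 (wM A θ2)
  have h1 : Polynomial.eval (wM A θ2) P = tf d θ2 := eval_wM A P hP hdet hd θ2
  have key : ε^d ≤ ∏ i, (wM A θ2 - lam A θ1 i) := by
    have : ε^d = ∏ _i : Fin d, ε := by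
      rw [Finset.prod_const, Finset.card_univ, Fintype.card_fin]
    rw [this]
    refine Finset.prod_le_prod (fun i _ => hε.le) (fun i _ => ?_)
    have := le_wM A θ1 i
    linarith
  rw [← h2, h1] at key
  linarith

end main

theorem stmt10 {d : ℕ} (hd : 3 ≤ d) (A : Matrix (Fin d) (Fin d) ℂ)
    (hC : CondC A) (hdet : A.det = (-1 : ℂ) ^ (d - 1)) :
    Continuous (wM A) ∧
    (∀ θ : ℝ, wM A (-θ) = wM A θ) ∧
    (∀ θ : ℝ, wM A (θ + 2 * Real.pi / d) = wM A θ) ∧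
    StrictAntiOn (wM A) (Set.Icc 0 (Real.pi / d)) ∧
    (∀ θ : ℝ, wM A θ ≤ wM A 0) ∧
    (∀ θ : ℝ, wM A (Real.pi / d) ≤ wM A θ) := by
  obtain ⟨P, hP⟩ := hC
  have hd0 : (0:ℝ) < d := by
    have : (3:ℝ) ≤ (d:ℝ) := by exact_mod_cast hd
    linarith
  have hc0 : (0:ℝ) < (1/2:ℝ)^(d-1) := by positivity
  have tcont : Continuous (tf d) := by
    unfold tf
    exact continuous_const.mul (Real.continuous_cos.comp (continuous_const.mul continuous_id))
  refine ⟨?_, ?_, ?_, ?_, ?_, ?_⟩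
  · -- continuity
    rw [continuous_iff_continuousAt]
    intro θ0
    rw [Metric.continuousAt_iff]
    intro ε hε
    have hε2 : (0:ℝ) < (ε/2)^d := by positivity
    obtain ⟨δ, hδ, hδ2⟩ := Metric.continuousAt_iff.mp (tcont.continuousAt (x := θ0)) _ hε2
    refine ⟨δ, hδ, fun {θ} hθ => ?_⟩
    have ht := hδ2 hθ
    rw [Real.dist_eq] at ht ⊢
    have h1 : wM A θ < wM A θ0 + ε/2 := by
      by_contra hcon
      push_neg at hcon
      have := cont_aux A P hP hdet hd (by linarith : (0:ℝ) < ε/2)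
        (by linarith : wM A θ0 + ε/2 ≤ wM A θ)
      rw [abs_lt] at ht
      linarith
    have h2 : wM A θ0 < wM A θ + ε/2 := by
      by_contra hcon
      push_neg at hcon
      have := cont_aux A P hP hdet hd (by linarith : (0:ℝ) < ε/2)
        (by linarith : wM A θ + ε/2 ≤ wM A θ0)
      rw [abs_lt] at ht
      linarith
    rw [abs_lt]
    constructor <;> linarith
  · -- even
    intro θ
    refine wM_eq_wM A P hP hdet ?_
    unfold tf
    rw [mul_neg, Real.cos_neg]
  · -- periodic
    intro θ
    refine wM_eq_wM A P hP hdet ?_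
    unfold tf
    have : (d:ℝ) * (θ + 2 * Real.pi / d) = (d:ℝ) * θ + 2 * Real.pi := by
      field_simp
    rw [this, Real.cos_add_two_pi]
  · -- strict anti
    intro θ1 h1 θ2 h2 hlt
    refine wM_lt_wM A P hP hdet hd ?_
    unfold tf
    have hmem1 : (d:ℝ) * θ1 ∈ Set.Icc 0 Real.pi := by
      constructor
      · exact mul_nonneg hd0.le h1.1
      · calc (d:ℝ) * θ1 ≤ (d:ℝ) * (Real.pi / d) := by
              exact mul_le_mul_of_nonneg_left h1.2 hd0.le
          _ = Real.pi := by field_simp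
    have hmem2 : (d:ℝ) * θ2 ∈ Set.Icc 0 Real.pi := by
      constructor
      · exact mul_nonneg hd0.le h2.1
      · calc (d:ℝ) * θ2 ≤ (d:ℝ) * (Real.pi / d) := by
              exact mul_le_mul_of_nonneg_left h2.2 hd0.le
          _ = Real.pi := by field_simp
    have := Real.strictAntiOn_cos hmem1 hmem2 (by exact mul_lt_mul_of_pos_left hlt hd0)
    exact mul_lt_mul_of_pos_left this hc0
  · -- max at 0
    intro θ
    refine wM_le_wM A P hP hdet hd ?_
    unfold tf
    rw [mul_zero, Real.cos_zero, mul_one]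
    have := Real.cos_le_one ((d:ℝ) * θ)
    nlinarith
  · -- min at π/d
    intro θ
    refine wM_le_wM A P hP hdet hd ?_
    unfold tf
    have : (d:ℝ) * (Real.pi / d) = Real.pi := by field_simp
    rw [this, Real.cos_pi, mul_neg_one]
    have := Real.neg_one_le_cos ((d:ℝ) * θ)
    nlinarith
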